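/- The initial BMO-discrepancy in dimension d equals 12^{−d/2}; i.e., for the empty point set, ‖Δ_∅‖²_BMO := sup_{U ⊆ [0,1)^d, λ_d(U)>0} λ_d(U)^{−1} ∑_{j∈ℕ₀^d} 2^{|j|} ∑_{m∈D_j, I_{j,m}⊆U} |⟨Δ_∅, h_{j,m}⟩|² = 12^{−d}. -/

import Mathlib

open MeasureTheory Set
open scoped Classical

/-- The one-dimensional dyadic Haar function `h_{j,m}`: `+1` on the left half
of the dyadic interval `I_{j,m} = [m/2^j, (m+1)/2^j)`, `-1` on the right half,
`0` elsewhere. -/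
noncomputable def haar1 (j m : ℕ) (x : ℝ) : ℝ :=
  if x ∈ Set.Ico ((m : ℝ) / 2 ^ j) (((m : ℝ) + 1 / 2) / 2 ^ j) then 1
  else if x ∈ Set.Ico (((m : ℝ) + 1 / 2) / 2 ^ j) (((m : ℝ) + 1) / 2 ^ j) then -1
  else 0

/-- The dyadic interval `I_{j,m} = [m/2^j, (m+1)/2^j)`. -/
def dyadicI (j m : ℕ) : Set ℝ := Set.Ico ((m : ℝ) / 2 ^ j) (((m : ℝ) + 1) / 2 ^ j)

/-- The unit cube `[0,1)^d`. -/
def unitBox (d : ℕ) : Set (Fin d → ℝ) := Set.univ.pi fun _ => Set.Ico (0 : ℝ) 1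

/-- The tensor product Haar function `h_{j,m}` on `[0,1)^d`. -/
noncomputable def haarD {d : ℕ} (j m : Fin d → ℕ) (x : Fin d → ℝ) : ℝ :=
  ∏ i, haar1 (j i) (m i) (x i)

/-- The dyadic box `I_{j,m} ⊆ [0,1)^d`. -/
def dyadicBox {d : ℕ} (j m : Fin d → ℕ) : Set (Fin d → ℝ) :=
  Set.univ.pi fun i => dyadicI (j i) (m i)

/-- The Haar coefficient `⟨f, h_{j,m}⟩ = ∫_{[0,1)^d} f·h_{j,m}`. -/
noncomputable def haarCoef {d : ℕ} (f : (Fin d → ℝ) → ℝ) (j m : Fin d → ℕ) : ℝ :=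
  ∫ x in unitBox d, f x * haarD j m x

/-- The anchored local discrepancy `Δ_P([0,t))` of the point set `P`. -/
noncomputable def discAnch {d N : ℕ} (P : Fin N → Fin d → ℝ) (t : Fin d → ℝ) : ℝ :=
  ((Finset.univ.filter fun i => ∀ k, 0 ≤ P i k ∧ P i k < t k).card : ℝ) / N
    - ∏ k, t k

/-- The local discrepancy `Δ_P([a,b))` of the point set `P` on the box `[a,b)`. -/
noncomputable def discBoxFn {d N : ℕ} (P : Fin N → Fin d → ℝ) (a b : Fin d → ℝ) : ℝ :=
  ((Finset.univ.filter fun i => ∀ k, a k ≤ P i k ∧ P i k < b k).card : ℝ) / N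
    - ∏ k, (b k - a k)

/-- Squared extreme (unanchored) `L₂`-discrepancy. -/
noncomputable def L2extrSq {d N : ℕ} (P : Fin N → Fin d → ℝ) : ℝ :=
  ∫ x in unitBox d, ∫ y in unitBox d,
    (if x ≤ y then (discBoxFn P x y) ^ 2 else 0)

/-- The squared (product dyadic) BMO seminorm of `f`, via Haar coefficients. -/
noncomputable def bmoSq {d : ℕ} (f : (Fin d → ℝ) → ℝ) : ℝ :=
  ⨆ U : {U : Set (Fin d → ℝ) // MeasurableSet U ∧ U ⊆ unitBox d ∧ 0 < volume U},
    (volume U.1).toReal⁻¹ *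
      ∑' j : Fin d → ℕ, (2 : ℝ) ^ (∑ i, j i) *
        ∑ m ∈ Fintype.piFinset (fun i => Finset.range (2 ^ j i)),
          (if dyadicBox j m ⊆ U.1 then (haarCoef f j m) ^ 2 else 0)

/-!
Write `Δ(t) = -t₁⋯t_d`. Its Haar coefficients factor into one-dimensional ones,
`∫ t h_{j,m}(t) dt = -4^{-(j+1)}`, so `|⟨Δ, h_{j,m}⟩|² = 16^{-(d+|j|)}` for every dyadic box.
The level-`j` term of the BMO sum over `U` is therefore `2^{|j|} · 16^{-(d+|j|)}` times the number
of level-`j` boxes inside `U`; since these boxes are disjoint of volume `2^{-|j|}`, there are at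
most `2^{|j|} λ(U)` of them, with equality for `U = [0,1)^d`. Hence every `U` gives at most
`∑_j 16^{-d} 4^{-|j|} = 16^{-d} (4/3)^d = 12^{-d}`, and the unit cube attains it.
-/

open scoped Finset ENNReal

theorem mem_dyadicI_iff {j m : ℕ} {x : ℝ} : x ∈ dyadicI j m ↔ ⌊x * 2 ^ j⌋ = m := by
  have h2 : (0 : ℝ) < 2 ^ j := by positivity
  rw [dyadicI, Set.mem_Ico, Int.floor_eq_iff, div_le_iff₀ h2, lt_div_iff₀ h2]
  push_cast
  rfl

theorem dyadicI_subset_Ico {j m : ℕ} (hm : m < 2 ^ j) : dyadicI j m ⊆ Ico 0 1 := by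
  have h2 : (0 : ℝ) < 2 ^ j := by positivity
  have hm' : (m : ℝ) + 1 ≤ 2 ^ j := by exact_mod_cast hm
  exact Ico_subset_Ico (by positivity) ((div_le_one h2).2 hm')

theorem dyadicBox_subset_unitBox {d : ℕ} {j m : Fin d → ℕ} (hm : ∀ i, m i < 2 ^ j i) :
    dyadicBox j m ⊆ unitBox d :=
  pi_mono fun i _ => dyadicI_subset_Ico (hm i)

open Function in
theorem pairwise_disjoint_dyadicBox {d : ℕ} (j : Fin d → ℕ) :
    Pairwise (Disjoint on (dyadicBox j)) := by
  intro m m' hne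
  obtain ⟨i, hi⟩ := Function.ne_iff.1 hne
  refine disjoint_left.2 fun x hx hx' => hi ?_
  have hfloor := (mem_dyadicI_iff.1 (hx i (mem_univ i))).symm.trans
    (mem_dyadicI_iff.1 (hx' i (mem_univ i)))
  exact_mod_cast hfloor

theorem volume_dyadicBox {d : ℕ} (j m : Fin d → ℕ) :
    volume (dyadicBox j m) = (2 ^ ∑ i, j i)⁻¹ := by
  simp only [dyadicBox, dyadicI, volume_pi_pi, Real.volume_Ico, ← sub_div, add_sub_cancel_left]
  rw [← Finset.prod_pow_eq_pow_sum, ENNReal.prod_inv_distrib fun _ _ _ _ _ => by simp]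
  refine Finset.prod_congr rfl fun i _ => ?_
  rw [one_div, ENNReal.ofReal_inv_of_pos (by positivity), ENNReal.ofReal_pow zero_le_two,
    ENNReal.ofReal_ofNat]

theorem card_dyadicBox_subset_mul_le {d : ℕ} (U : Set (Fin d → ℝ)) (j : Fin d → ℕ)
    (s : Finset (Fin d → ℕ)) :
    (#{m ∈ s | dyadicBox j m ⊆ U} : ℝ≥0∞) * (2 ^ ∑ i, j i)⁻¹ ≤ volume U :=
  calc (#{m ∈ s | dyadicBox j m ⊆ U} : ℝ≥0∞) * (2 ^ ∑ i, j i)⁻¹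
      = ∑ m ∈ s with dyadicBox j m ⊆ U, volume (dyadicBox j m) := by
        simp [volume_dyadicBox]
    _ = volume (⋃ m ∈ {m ∈ s | dyadicBox j m ⊆ U}, dyadicBox j m) :=
        (measure_biUnion_finset ((pairwise_disjoint_dyadicBox j).set_pairwise _)
          fun m _ => MeasurableSet.univ_pi fun _ => measurableSet_Ico).symm
    _ ≤ volume U := measure_mono (iUnion₂_subset fun m hm => (Finset.mem_filter.1 hm).2)

theorem haar1_eq_zero_of_notMem {j m : ℕ} {x : ℝ} (hx : x ∉ dyadicI j m) : haar1 j m x = 0 := by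
  have hlo : (m : ℝ) / 2 ^ j ≤ (m + 1 / 2) / 2 ^ j := by gcongr; norm_num
  have hhi : ((m : ℝ) + 1 / 2) / 2 ^ j ≤ (m + 1) / 2 ^ j := by gcongr; norm_num
  rw [haar1, if_neg fun h => hx ⟨h.1, h.2.trans_le hhi⟩, if_neg fun h => hx ⟨hlo.trans h.1, h.2⟩]

theorem haarD_eq_zero_of_notMem {d : ℕ} {j m : Fin d → ℕ} {x : Fin d → ℝ}
    (hx : x ∉ dyadicBox j m) : haarD j m x = 0 := by
  obtain ⟨i, -, hi⟩ := not_forall₂.1 hx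
  exact Finset.prod_eq_zero (Finset.mem_univ i) (haar1_eq_zero_of_notMem hi)

theorem haarCoef_prod {d : ℕ} (φ : Fin d → ℝ → ℝ) {j m : Fin d → ℕ} (hm : ∀ i, m i < 2 ^ j i) :
    haarCoef (fun x => ∏ i, φ i (x i)) j m = ∏ i, ∫ t, φ i t * haar1 (j i) (m i) t := by
  rw [haarCoef, setIntegral_eq_integral_of_forall_compl_eq_zero fun x hx => by
    rw [haarD_eq_zero_of_notMem fun h => hx (dyadicBox_subset_unitBox hm h), mul_zero]]
  simp_rw [haarD, ← Finset.prod_mul_distrib]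
  rw [volume_pi]
  exact integral_fintype_prod_eq_prod (μ := fun _ => volume) fun i t => φ i t * haar1 (j i) (m i) t

theorem setIntegral_Ico_id {a b : ℝ} (hab : a ≤ b) : ∫ t in Ico a b, t = (b ^ 2 - a ^ 2) / 2 := by
  rw [integral_Ico_eq_integral_Ioc, ← intervalIntegral.integral_of_le hab, integral_id]

theorem mul_haar1_eq_indicator_sub (j m : ℕ) (t : ℝ) :
    t * haar1 j m t =
      (Ico ((m : ℝ) / 2 ^ j) ((m + 1 / 2) / 2 ^ j)).indicator id t
        - (Ico (((m : ℝ) + 1 / 2) / 2 ^ j) ((m + 1) / 2 ^ j)).indicator id t := by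
  rw [haar1]
  by_cases hl : t ∈ Ico ((m : ℝ) / 2 ^ j) ((m + 1 / 2) / 2 ^ j)
  · have hr : t ∉ Ico (((m : ℝ) + 1 / 2) / 2 ^ j) ((m + 1) / 2 ^ j) := fun h => h.1.not_gt hl.2
    rw [if_pos hl, indicator_of_mem hl, indicator_of_notMem hr, id, mul_one, sub_zero]
  by_cases hr : t ∈ Ico (((m : ℝ) + 1 / 2) / 2 ^ j) ((m + 1) / 2 ^ j)
  · rw [if_neg hl, if_pos hr, indicator_of_notMem hl, indicator_of_mem hr, id, mul_neg_one,
      zero_sub]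
  · rw [if_neg hl, if_neg hr, indicator_of_notMem hl, indicator_of_notMem hr, mul_zero, sub_zero]

theorem integral_mul_haar1 (j m : ℕ) : ∫ t, t * haar1 j m t = -(4 ^ (j + 1))⁻¹ := by
  have hlo : (m : ℝ) / 2 ^ j ≤ (m + 1 / 2) / 2 ^ j := by gcongr; norm_num
  have hhi : ((m : ℝ) + 1 / 2) / 2 ^ j ≤ (m + 1) / 2 ^ j := by gcongr; norm_num
  have hint (a b : ℝ) : Integrable ((Ico a b).indicator id) :=
    (integrable_indicator_iff measurableSet_Ico).2
      (continuous_id.integrableOn_Icc.mono_set Ico_subset_Icc_self)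
  simp_rw [mul_haar1_eq_indicator_sub]
  rw [integral_sub (hint _ _) (hint _ _), integral_indicator measurableSet_Ico,
    integral_indicator measurableSet_Ico]
  simp only [id]
  have h4 : (4 : ℝ) ^ j = (2 ^ j) ^ 2 := by rw [← pow_mul, mul_comm, pow_mul]; norm_num
  rw [setIntegral_Ico_id hlo, setIntegral_Ico_id hhi, pow_succ 4, h4]
  field_simp
  ring

theorem haarCoef_neg_prod_sq {d : ℕ} {j m : Fin d → ℕ} (hm : ∀ i, m i < 2 ^ j i) :
    haarCoef (fun t : Fin d → ℝ => -∏ i, t i) j m ^ 2 = (16 ^ (d + ∑ i, j i))⁻¹ := by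
  have hneg : haarCoef (fun t : Fin d → ℝ => -∏ i, t i) j m =
      -haarCoef (fun t : Fin d → ℝ => ∏ i, t i) j m := by
    simp only [haarCoef, neg_mul, integral_neg]
  rw [hneg, neg_sq, haarCoef_prod (fun _ t => t) hm]
  simp only [integral_mul_haar1, ← Finset.prod_pow, neg_sq, inv_pow, ← pow_mul]
  rw [Finset.prod_inv_distrib, Finset.prod_pow_eq_pow_sum, ← Finset.sum_mul,
    Finset.sum_add_distrib, pow_mul', add_comm]
  norm_num

noncomputable def bmoLevelSum {d : ℕ} (f : (Fin d → ℝ) → ℝ) (U : Set (Fin d → ℝ))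
    (j : Fin d → ℕ) : ℝ :=
  (2 : ℝ) ^ (∑ i, j i) *
    ∑ m ∈ Fintype.piFinset (fun i => Finset.range (2 ^ j i)),
      (if dyadicBox j m ⊆ U then (haarCoef f j m) ^ 2 else 0)

theorem bmoLevelSum_nonneg {d : ℕ} (f : (Fin d → ℝ) → ℝ) (U : Set (Fin d → ℝ))
    (j : Fin d → ℕ) : 0 ≤ bmoLevelSum f U j :=
  mul_nonneg (by positivity) (Finset.sum_nonneg fun m _ => by split_ifs <;> positivity)

theorem bmoLevelSum_neg_prod {d : ℕ} (U : Set (Fin d → ℝ)) (j : Fin d → ℕ) :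
    bmoLevelSum (fun t : Fin d → ℝ => -∏ i, t i) U j =
      #{m ∈ Fintype.piFinset (fun i => Finset.range (2 ^ j i)) | dyadicBox j m ⊆ U} *
        (2 ^ ∑ i, j i)⁻¹ * (16 ^ d * 4 ^ ∑ i, j i)⁻¹ := by
  have hcoef : ∀ m ∈ Fintype.piFinset (fun i => Finset.range (2 ^ j i)),
      haarCoef (fun t : Fin d → ℝ => -∏ i, t i) j m ^ 2 = (16 ^ (d + ∑ i, j i))⁻¹ := fun m hm =>
    haarCoef_neg_prod_sq fun i => Finset.mem_range.1 (Fintype.mem_piFinset.1 hm i)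
  rw [bmoLevelSum, ← Finset.sum_filter, Finset.sum_congr rfl fun m hm =>
    hcoef m (Finset.mem_filter.1 hm).1, Finset.sum_const, nsmul_eq_mul, pow_add,
    show (16 : ℝ) = 4 * 4 by norm_num, show (4 : ℝ) = 2 * 2 by norm_num]
  simp only [mul_pow]
  field_simp

theorem bmoLevelSum_neg_prod_le {d : ℕ} {U : Set (Fin d → ℝ)} (hU : volume U ≠ ∞)
    (j : Fin d → ℕ) :
    bmoLevelSum (fun t : Fin d → ℝ => -∏ i, t i) U j ≤
      (volume U).toReal * (16 ^ d * 4 ^ ∑ i, j i)⁻¹ := by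
  have hcard := ENNReal.toReal_mono hU (card_dyadicBox_subset_mul_le U j
    (Fintype.piFinset fun i => Finset.range (2 ^ j i)))
  simp only [ENNReal.toReal_mul, ENNReal.toReal_natCast, ENNReal.toReal_inv, ENNReal.toReal_pow,
    ENNReal.toReal_ofNat] at hcard
  rw [bmoLevelSum_neg_prod]
  gcongr

theorem bmoLevelSum_neg_prod_unitBox {d : ℕ} (j : Fin d → ℕ) :
    bmoLevelSum (fun t : Fin d → ℝ => -∏ i, t i) (unitBox d) j = (16 ^ d * 4 ^ ∑ i, j i)⁻¹ := by
  have hall : {m ∈ Fintype.piFinset (fun i => Finset.range (2 ^ j i)) |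
      dyadicBox j m ⊆ unitBox d} = Fintype.piFinset (fun i => Finset.range (2 ^ j i)) :=
    Finset.filter_true_of_mem fun m hm =>
      dyadicBox_subset_unitBox fun i => Finset.mem_range.1 (Fintype.mem_piFinset.1 hm i)
  rw [bmoLevelSum_neg_prod, hall, Fintype.card_piFinset]
  simp [Finset.prod_pow_eq_pow_sum]

theorem hasSum_prod_pi {ι : Type*} {g : ι → ℝ} {s : ℝ} (hg : 0 ≤ g) (hs : HasSum g s) (d : ℕ) :
    HasSum (fun j : Fin d → ι => ∏ i, g (j i)) (s ^ d) := by
  induction d with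
  | zero => simp
  | succ n ih =>
    have hprod_nonneg : 0 ≤ fun j : Fin n → ι => ∏ i, g (j i) :=
      fun j => Finset.prod_nonneg fun i _ => hg (j i)
    have hsummable := hs.summable.mul_of_nonneg ih.summable hg hprod_nonneg
    have hprod := hs.mul ih hsummable
    rw [pow_succ', ← (Fin.consEquiv fun _ => ι).hasSum_iff]
    refine hprod.congr_fun fun p => ?_
    simp [Fin.consEquiv, Fin.prod_univ_succ]

theorem hasSum_inv_sixteen_pow_mul_four_pow (d : ℕ) :
    HasSum (fun j : Fin d → ℕ => (16 ^ d * 4 ^ ∑ i, j i : ℝ)⁻¹) ((1 / 12) ^ d) := by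
  have hgeom : HasSum (fun n : ℕ => (16 * 4 ^ n : ℝ)⁻¹) (1 / 12) := by
    have := (hasSum_geometric_of_lt_one (r := (4 : ℝ)⁻¹) (by norm_num) (by norm_num)).mul_left 16⁻¹
    rw [show (1 / 12 : ℝ) = 16⁻¹ * (1 - 4⁻¹)⁻¹ by norm_num]
    simpa only [mul_inv, inv_pow] using this
  convert hasSum_prod_pi (fun n => by positivity) hgeom d using 2 with j
  simp [Finset.prod_mul_distrib, Finset.prod_inv_distrib, Finset.prod_pow_eq_pow_sum]

theorem volume_unitBox (d : ℕ) : volume (unitBox d) = 1 := by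
  simp [unitBox, volume_pi_pi]

theorem initial_bmo_discrepancy_general (d : ℕ) :
    bmoSq (fun t : Fin d → ℝ => -∏ i, t i) = (1 / 12) ^ d := by
  have hle : ∀ U : {U : Set (Fin d → ℝ) // MeasurableSet U ∧ U ⊆ unitBox d ∧ 0 < volume U},
      (volume U.1).toReal⁻¹ * ∑' j, bmoLevelSum (fun t : Fin d → ℝ => -∏ i, t i) U.1 j ≤
        (1 / 12) ^ d := by
    rintro ⟨U, -, hsub, hpos⟩
    have hfin : volume U ≠ ∞ := ne_top_of_le_ne_top (by simp [volume_unitBox]) (measure_mono hsub)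
    have hw := (hasSum_inv_sixteen_pow_mul_four_pow d).mul_left (volume U).toReal
    rw [inv_mul_le_iff₀ (ENNReal.toReal_pos hpos.ne' hfin)]
    exact hasSum_le (bmoLevelSum_neg_prod_le hfin) (Summable.of_nonneg_of_le
      (bmoLevelSum_nonneg _ U) (bmoLevelSum_neg_prod_le hfin) hw.summable).hasSum hw
  have hunit : (volume (unitBox d)).toReal⁻¹ *
      ∑' j, bmoLevelSum (fun t : Fin d → ℝ => -∏ i, t i) (unitBox d) j = (1 / 12) ^ d := by
    simp_rw [volume_unitBox, bmoLevelSum_neg_prod_unitBox]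
    rw [(hasSum_inv_sixteen_pow_mul_four_pow d).tsum_eq]
    simp
  let U₀ : {U : Set (Fin d → ℝ) // MeasurableSet U ∧ U ⊆ unitBox d ∧ 0 < volume U} :=
    ⟨unitBox d, MeasurableSet.univ_pi fun _ => measurableSet_Ico, subset_rfl,
      by simp [volume_unitBox]⟩
  have : Nonempty _ := ⟨U₀⟩
  exact le_antisymm (ciSup_le hle) (le_ciSup_of_le ⟨_, forall_mem_range.2 hle⟩ U₀ hunit.ge)

theorem initial_bmo_discrepancy (d : ℕ) (hd : 1 ≤ d) :
    bmoSq (fun t : Fin d → ℝ => -∏ i, t i) = (1 / 12) ^ d :=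
  initial_bmo_discrepancy_general d
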